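/- Suppose τ_r = τ_{rs} + τ_{r\s} and τ_s = τ_{rs} + τ_{s\r} where the decomposed parts are pairwise independent, Var(τ_r) = θ²τ̂_r², Var(τ_s) = θ²τ̂_s², Var(τ_{r\s}) = θ²τ̂_r·τ̂_{r\s}, and Var(τ_{s\r}) = θ²τ̂_s·τ̂_{s\r}, with τ̂_r = τ̂_{rs} + τ̂_{r\s} and τ̂_s = τ̂_{rs} + τ̂_{s\r}. Then Cov(τ_r, τ_s) = θ²·τ̂_{rs}·(τ̂_r + τ̂_s)/2. -/

import Mathlib

open MeasureTheory ProbabilityTheory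

/-! Writing `τr - τs = τr∖s - τs∖r`, the shared part cancels and independence of the two
remaining parts gives `Var (τr - τs) = Var τr∖s + Var τs∖r`; polarization
`2 Cov (τr, τs) = Var τr + Var τs - Var (τr - τs)` then yields the formula. -/

/-- Covariance of two real random variables. -/
noncomputable def cov {Ω : Type*} [MeasurableSpace Ω] (P : Measure Ω) (X Y : Ω → ℝ) : ℝ :=
  ∫ ω, (X ω - ∫ ω', X ω' ∂P) * (Y ω - ∫ ω', Y ω' ∂P) ∂P

lemma cov_eq_covariance {Ω : Type*} [MeasurableSpace Ω] (P : Measure Ω) (X Y : Ω → ℝ) :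
    cov P X Y = covariance X Y P :=
  rfl

namespace ProbabilityTheory

variable {Ω : Type*} [MeasurableSpace Ω] {μ : Measure Ω} {X Y : Ω → ℝ}

lemma IndepFun.variance_sub [IsFiniteMeasure μ] (h : IndepFun X Y μ) (hX : MemLp X 2 μ)
    (hY : MemLp Y 2 μ) : variance (X - Y) μ = variance X μ + variance Y μ := by
  rw [ProbabilityTheory.variance_sub hX hY, h.covariance_eq_zero hX hY]
  ring

lemma two_mul_covariance_eq [IsFiniteMeasure μ] (hX : MemLp X 2 μ) (hY : MemLp Y 2 μ) :
    2 * covariance X Y μ = variance X μ + variance Y μ - variance (X - Y) μ := by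
  rw [ProbabilityTheory.variance_sub hX hY]
  ring

end ProbabilityTheory

theorem stmt1_general {Ω : Type*} [MeasurableSpace Ω] (P : Measure Ω) [IsProbabilityMeasure P]
    (τr τs τrs τrns τsnr : Ω → ℝ) (θ hatr hats hatrs hatrns hatsnr : ℝ)
    (hdecr : ∀ ω, τr ω = τrs ω + τrns ω)
    (hdecs : ∀ ω, τs ω = τrs ω + τsnr ω)
    (hm1 : MemLp τrs 2 P) (hm2 : MemLp τrns 2 P) (hm3 : MemLp τsnr 2 P)
    (hi3 : IndepFun τrns τsnr P)
    (hvr : variance τr P = θ ^ 2 * hatr ^ 2)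
    (hvs : variance τs P = θ ^ 2 * hats ^ 2)
    (hvrns : variance τrns P = θ ^ 2 * hatr * hatrns)
    (hvsnr : variance τsnr P = θ ^ 2 * hats * hatsnr)
    (hhr : hatr = hatrs + hatrns) (hhs : hats = hatrs + hatsnr) :
    cov P τr τs = θ ^ 2 * hatrs * (hatr + hats) / 2 := by
  obtain rfl : τr = τrs + τrns := funext hdecr
  obtain rfl : τs = τrs + τsnr := funext hdecs
  have hdiff : (τrs + τrns) - (τrs + τsnr) = τrns - τsnr := add_sub_add_left_eq_sub _ _ _
  have hpolar := two_mul_covariance_eq (hm1.add hm2) (hm1.add hm3) (μ := P)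
  rw [hdiff, hi3.variance_sub hm2 hm3, hvr, hvs, hvrns, hvsnr] at hpolar
  rw [cov_eq_covariance]
  subst hhr hhs
  linear_combination hpolar / 2

theorem stmt1 {Ω : Type*} [MeasurableSpace Ω] (P : Measure Ω) [IsProbabilityMeasure P]
    (τr τs τrs τrns τsnr : Ω → ℝ) (θ hatr hats hatrs hatrns hatsnr : ℝ)
    (hθ : 0 ≤ θ) (hhatr : 0 ≤ hatr) (hhats : 0 ≤ hats) (hhatrs : 0 ≤ hatrs)
    (hhatrns : 0 ≤ hatrns) (hhatsnr : 0 ≤ hatsnr)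
    (hdecr : ∀ ω, τr ω = τrs ω + τrns ω)
    (hdecs : ∀ ω, τs ω = τrs ω + τsnr ω)
    (hm1 : MemLp τrs 2 P) (hm2 : MemLp τrns 2 P) (hm3 : MemLp τsnr 2 P)
    (hi1 : IndepFun τrs τrns P) (hi2 : IndepFun τrs τsnr P) (hi3 : IndepFun τrns τsnr P)
    (hvr : variance τr P = θ ^ 2 * hatr ^ 2)
    (hvs : variance τs P = θ ^ 2 * hats ^ 2)
    (hvrns : variance τrns P = θ ^ 2 * hatr * hatrns)
    (hvsnr : variance τsnr P = θ ^ 2 * hats * hatsnr)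
    (hhr : hatr = hatrs + hatrns) (hhs : hats = hatrs + hatsnr) :
    cov P τr τs = θ ^ 2 * hatrs * (hatr + hats) / 2 :=
  stmt1_general P τr τs τrs τrns τsnr θ hatr hats hatrs hatrns hatsnr hdecr hdecs hm1 hm2 hm3 hi3
    hvr hvs hvrns hvsnr hhr hhs
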